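/- Let M_1, M_2 be matroids on [n] of ranks k and k−1 respectively. If M_2 is a quotient of M_1 (i.e., for every linear order on [n] the ≤-maximal basis of M_2 is contained in the ≤-maximal basis of M_1), then for every D_n-admissible order on [n] ∪ [n]*, the maximal bases of Φ(M_1) and Φ(M_2) have symmetric difference {i, i*} for some i, i.e., Φ(M_1), Φ(M_2) are a Lagrangian pair. -/

import Mathlib

/-- `J n` models `[n] ∪ [n]*` : the element `(i, false)` is `i` and `(i, true)` is `i*`. -/
abbrev J (n : ℕ) := Fin n × Bool

/-- The star involution `i ↦ i*`, `i* ↦ i`. -/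
def jstar {n : ℕ} (x : J n) : J n := (x.1, !x.2)

/-- `K* = { k* : k ∈ K }`. -/
def starSet {n : ℕ} (K : Finset (J n)) : Finset (J n) := K.image jstar

/-- A subset `K ⊆ [n] ∪ [n]*` is admissible if `K ∩ K* = ∅`. -/
def Admissible {n : ℕ} (K : Finset (J n)) : Prop := K ∩ starSet K = ∅

/-- Gale order: `A ≤ B` iff there is an injection of `A` into `B` increasing each element. -/
def GaleLE {α : Type*} (r : α → α → Prop) (A B : Finset α) : Prop :=
  ∃ f : α → α, Set.InjOn f A ∧ (∀ a ∈ A, f a ∈ B) ∧ ∀ a ∈ A, r a (f a)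

/-- A `Dₙ`-admissible ordering of `[n] ∪ [n]*`: a partial order reversed by `*`,
linear except that the middle two elements (a pair `{i, i*}`) are incomparable. -/
structure DnOrder (n : ℕ) where
  le : J n → J n → Prop
  refl : ∀ i, le i i
  trans : ∀ i j k, le i j → le j k → le i k
  antisymm : ∀ i j, le i j → le j i → i = j
  star_anti : ∀ i j, le i j → le (jstar j) (jstar i)
  almost_total : ∀ i j : J n, le i j ∨ le j i ∨ j = jstar i
  middle : ∃ i : J n, ¬ le i (jstar i) ∧ ¬ le (jstar i) i

/-- `ℬ` is the collection of bases of a matroid of rank `k` on `[n]`. -/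
def MatroidBases {n : ℕ} (k : ℕ) (ℬ : Set (Finset (Fin n))) : Prop :=
  ℬ.Nonempty ∧ (∀ B ∈ ℬ, B.card = k) ∧
    ∀ A ∈ ℬ, ∀ B ∈ ℬ, ∀ a ∈ A \ B, ∃ b ∈ B \ A, insert b (A.erase a) ∈ ℬ

/-- `Φ(B) = B ∪ ([n] \ B)*`. -/
def Phi {n : ℕ} (B : Finset (Fin n)) : Finset (J n) :=
  B.image (fun i => (i, false)) ∪ Bᶜ.image (fun i => (i, true))

/-- `M₂` is a quotient of `M₁`: for every linear order on `[n]`, the Gale-maximal basis of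
`M₂` is contained in the Gale-maximal basis of `M₁`. -/
def IsQuotient {n : ℕ} (ℬ₁ ℬ₂ : Set (Finset (Fin n))) : Prop :=
  ∀ ro : Fin n → Fin n → Prop, IsLinearOrder (Fin n) ro →
    ∀ B₁ ∈ ℬ₁, ∀ B₂ ∈ ℬ₂,
      (∀ A ∈ ℬ₁, GaleLE ro A B₁) → (∀ A ∈ ℬ₂, GaleLE ro A B₂) → B₂ ⊆ B₁

@[simp] lemma jstar_jstar' {n : ℕ} (x : J n) : jstar (jstar x) = x := by
  cases x with
  | mk i b => simp [jstar]


section Gale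
set_option linter.unusedSectionVars false
variable {α : Type*} [DecidableEq α] {r : α → α → Prop}

lemma gale_mono {r' : α → α → Prop} (h : ∀ a b, r a b → r' a b) {A B : Finset α}
    (hg : GaleLE r A B) : GaleLE r' A B := by
  obtain ⟨f, h1, h2, h3⟩ := hg
  exact ⟨f, h1, h2, fun a ha => h _ _ (h3 a ha)⟩

lemma gale_trans (ht : ∀ a b c, r a b → r b c → r a c) {A B C : Finset α}
    (h1 : GaleLE r A B) (h2 : GaleLE r B C) : GaleLE r A C := by
  obtain ⟨f, fi, fm, fr⟩ := h1
  obtain ⟨g, gi, gm, gr⟩ := h2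
  refine ⟨g ∘ f, fun x hx y hy h => fi hx hy (gi (fm x hx) (fm y hy) h),
    fun a ha => gm _ (fm a ha), fun a ha => ht _ _ _ (fr a ha) (gr _ (fm a ha))⟩

lemma gale_filter_card {A B : Finset α} (h : GaleLE r A B) (p : α → Prop) [DecidablePred p]
    (hp : ∀ a b, p a → r a b → p b) :
    (A.filter p).card ≤ (B.filter p).card := by
  obtain ⟨f, hinj, hmem, hrel⟩ := h
  refine Finset.card_le_card_of_injOn f (fun a ha => ?_) (hinj.mono ?_)
  · rw [Finset.mem_coe, Finset.mem_filter] at ha ⊢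
    exact ⟨hmem a ha.1, hp _ _ ha.2 (hrel a ha.1)⟩
  · intro x hx; exact Finset.mem_filter.mp hx |>.1

lemma exists_rmin (hrefl : ∀ a, r a a) (htrans : ∀ a b c, r a b → r b c → r a c)
    (htot : ∀ a b, r a b ∨ r b a) :
    ∀ S : Finset α, S.Nonempty → ∃ x ∈ S, ∀ y ∈ S, r x y := by
  intro S
  induction S using Finset.induction_on with
  | empty => intro h; exact absurd rfl h.ne_empty
  | insert a S ha ih =>
    intro _
    rcases S.eq_empty_or_nonempty with rfl | hS
    · exact ⟨a, Finset.mem_insert_self a _, by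
        intro y hy
        rcases Finset.mem_insert.mp hy with rfl | h
        · exact hrefl y
        · simp at h⟩
    · obtain ⟨x, hxS, hmin⟩ := ih hS
      rcases htot a x with h | h
      · refine ⟨a, Finset.mem_insert_self a _, fun y hy => ?_⟩
        rcases Finset.mem_insert.mp hy with rfl | hyS
        · exact hrefl y
        · exact htrans _ _ _ h (hmin y hyS)
      · exact ⟨x, Finset.mem_insert_of_mem hxS, fun y hy => by
          rcases Finset.mem_insert.mp hy with rfl | hyS
          · exact h
          · exact hmin y hyS⟩

lemma injOn_le_fixed (htrans : ∀ a b c, r a b → r b c → r a c)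
    (hanti : ∀ a b, r a b → r b a → a = b) (hrefl : ∀ a, r a a)
    (htot : ∀ a b, r a b ∨ r b a) :
    ∀ (S : Finset α) (h : α → α), Set.InjOn h S → (∀ x ∈ S, h x ∈ S) →
      (∀ x ∈ S, r x (h x)) → ∀ x ∈ S, h x = x := by
  intro S
  induction S using Finset.strongInduction with
  | _ S ih =>
    intro h hinj hmap hrel x hx
    obtain ⟨x0, hx0S, htop⟩ := exists_rmin (r := fun a b => r b a) hrefl
      (fun a b c hab hbc => htrans _ _ _ hbc hab) (fun a b => (htot b a)) S ⟨x, hx⟩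
    have hfix : h x0 = x0 := hanti _ _ (htop _ (hmap _ hx0S)) (hrel _ hx0S)
    by_cases hxx : x = x0
    · rw [hxx]; exact hfix
    · refine ih (S.erase x0) (Finset.erase_ssubset hx0S) h
        (hinj.mono (by intro y hy; exact Finset.mem_of_mem_erase hy))
        (fun y hy => ?_) (fun y hy => hrel y (Finset.mem_of_mem_erase hy))
        x (Finset.mem_erase.mpr ⟨hxx, hx⟩)
      have hyS := Finset.mem_of_mem_erase hy
      refine Finset.mem_erase.mpr ⟨fun hcon => ?_, hmap y hyS⟩
      have : y = x0 := hinj hyS hx0S (by rw [hcon, hfix])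
      exact (Finset.mem_erase.mp hy).1 this

lemma gale_antisymm (htrans : ∀ a b c, r a b → r b c → r a c)
    (hanti : ∀ a b, r a b → r b a → a = b) (hrefl : ∀ a, r a a)
    (htot : ∀ a b, r a b ∨ r b a) {A B : Finset α}
    (h1 : GaleLE r A B) (h2 : GaleLE r B A) : A = B := by
  have key : ∀ X Y : Finset α, GaleLE r X Y → GaleLE r Y X → X ⊆ Y := by
    intro X Y hXY hYX
    obtain ⟨f, fi, fm, fr⟩ := hXY
    obtain ⟨g, gi, gm, gr⟩ := hYX
    have hfix : ∀ x ∈ X, g (f x) = x := by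
      apply injOn_le_fixed htrans hanti hrefl htot X (g ∘ f)
        (fun x hx y hy h => fi hx hy (gi (fm x hx) (fm y hy) h))
        (fun x hx => gm _ (fm x hx))
        (fun x hx => htrans _ _ _ (fr x hx) (gr _ (fm x hx)))
    intro x hx
    have hfx : x = f x := hanti _ _ (fr x hx) (by
      have := gr (f x) (fm x hx); rwa [hfix x hx] at this)
    rw [hfx]; exact fm x hx
  exact Finset.Subset.antisymm (key A B h1 h2) (key B A h2 h1)

lemma gale_of_counts [Fintype α] [DecidableRel r] (hrefl : ∀ a, r a a)
    (htrans : ∀ a b c, r a b → r b c → r a c)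
    (htot : ∀ a b, r a b ∨ r b a) {A B : Finset α}
    (hcount : ∀ x, (A.filter (fun y => r x y)).card ≤ (B.filter (fun y => r x y)).card) :
    GaleLE r A B := by
  classical
  set t : α → Finset α := fun x => if x ∈ A then B.filter (fun y => r x y) else Finset.univ
    with ht
  have hall : ∀ s : Finset α, s.card ≤ (s.biUnion t).card := by
    intro s
    by_cases hsA : ∀ y ∈ s, y ∈ A
    · rcases s.eq_empty_or_nonempty with rfl | hs
      · simp
      · obtain ⟨x0, hx0, hmin⟩ := exists_rmin hrefl htrans htot s hs
        calc s.card ≤ (A.filter (fun y => r x0 y)).card :=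
              Finset.card_le_card (fun y hy => Finset.mem_filter.mpr ⟨hsA y hy, hmin y hy⟩)
          _ ≤ (B.filter (fun y => r x0 y)).card := hcount x0
          _ = (t x0).card := by rw [ht]; simp [hsA x0 hx0]
          _ ≤ (s.biUnion t).card :=
              Finset.card_le_card (Finset.subset_biUnion_of_mem t hx0)
    · push_neg at hsA
      obtain ⟨y, hy, hyA⟩ := hsA
      calc s.card ≤ Finset.univ.card := Finset.card_le_univ s
        _ = (t y).card := by rw [ht]; simp [hyA]
        _ ≤ (s.biUnion t).card := Finset.card_le_card (Finset.subset_biUnion_of_mem t hy)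
  obtain ⟨f, hf, hmem⟩ := (Finset.all_card_le_biUnion_card_iff_exists_injective t).mp hall
  refine ⟨f, hf.injOn, fun a ha => ?_, fun a ha => ?_⟩
  · have := hmem a; rw [ht] at this; simp only [if_pos ha] at this
    exact (Finset.mem_filter.mp this).1
  · have := hmem a; rw [ht] at this; simp only [if_pos ha] at this
    exact (Finset.mem_filter.mp this).2

end Gale

section PhiLemmas
variable {n : ℕ}

@[simp] lemma jstar_jstar (x : J n) : jstar (jstar x) = x := by
  cases x with
  | mk i b => simp [jstar]

@[simp] lemma mem_phi_false {B : Finset (Fin n)} {i : Fin n} :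
    ((i, false) : J n) ∈ Phi B ↔ i ∈ B := by
  simp [Phi]

@[simp] lemma mem_phi_true {B : Finset (Fin n)} {i : Fin n} :
    ((i, true) : J n) ∈ Phi B ↔ i ∉ B := by
  simp [Phi]

lemma phi_injective {B C : Finset (Fin n)} (h : Phi B = Phi C) : B = C := by
  ext i
  constructor
  · intro hi
    have : ((i, false) : J n) ∈ Phi C := h ▸ (mem_phi_false.mpr hi)
    exact mem_phi_false.mp this
  · intro hi
    have : ((i, false) : J n) ∈ Phi B := h.symm ▸ (mem_phi_false.mpr hi)
    exact mem_phi_false.mp this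

lemma card_phi_filter (C : Finset (Fin n)) (p : J n → Prop) [DecidablePred p] :
    ((Phi C).filter p).card
      = (C.filter (fun i => p (i, false))).card + (Cᶜ.filter (fun i => p (i, true))).card := by
  classical
  have hinj0 : Function.Injective (fun i : Fin n => ((i, false) : J n)) :=
    fun a b h => congrArg Prod.fst h
  have hinj1 : Function.Injective (fun i : Fin n => ((i, true) : J n)) :=
    fun a b h => congrArg Prod.fst h
  rw [Phi, Finset.filter_union, Finset.card_union_of_disjoint, Finset.filter_image,
    Finset.filter_image, Finset.card_image_of_injective _ hinj0,
    Finset.card_image_of_injective _ hinj1]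
  · rw [Finset.disjoint_left]
    intro x hx hx'
    simp only [Finset.mem_filter, Finset.mem_image] at hx hx'
    obtain ⟨⟨a, _, rfl⟩, _⟩ := hx
    obtain ⟨⟨b, _, hb⟩, _⟩ := hx'
    exact Bool.false_ne_true (congrArg Prod.snd hb).symm

lemma phi_gale_of_gale {L : J n → J n → Prop}
    (hrefl : ∀ x, L x x) (htrans : ∀ x y z, L x y → L y z → L x z)
    (htot : ∀ x y, L x y ∨ L y x)
    (hstar : ∀ x y, L x y → L (jstar y) (jstar x))
    {A B : Finset (Fin n)} (hcard : A.card = B.card)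
    (hg : GaleLE (fun i j : Fin n => L (i, false) (j, false)) A B) :
    GaleLE L (Phi A) (Phi B) := by
  classical
  apply gale_of_counts hrefl htrans htot
  intro x
  rw [card_phi_filter, card_phi_filter]
  beta_reduce
  have main : ((A.filter (fun i => L x (i, false))).card + (Aᶜ.filter (fun i => L x (i, true))).card
      ≤ (B.filter (fun i => L x (i, false))).card + (Bᶜ.filter (fun i => L x (i, true))).card) := by
    have compl_eq : ∀ C : Finset (Fin n),
        (Cᶜ.filter (fun i => L x (i, true))).card + (C.filter (fun i => L x (i, true))).card
          = (Finset.univ.filter (fun i => L x (i, true))).card := by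
      intro C
      rw [← Finset.card_union_of_disjoint (Finset.disjoint_filter_filter
        (disjoint_compl_left : Disjoint Cᶜ C)), ← Finset.filter_union]
      congr 2
      exact compl_sup_eq_top
    have cA := compl_eq A
    have cB := compl_eq B
    have hstar' : ∀ a b : Fin n, L (a, false) (b, false) → L (b, true) (a, true) := by
      intro a b hab
      have := hstar _ _ hab
      simpa [jstar] using this
    have e0 : ∀ C : Finset (Fin n), (C.filter (fun i => L x (i, false))).card
        = (C.filter fun i => L x (i, false) ∧ L x (i, true)).card
          + (C.filter fun i => L x (i, false) ∧ ¬ L x (i, true)).card := by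
      intro C
      rw [← Finset.filter_filter, ← Finset.filter_filter,
        Finset.card_filter_add_card_filter_not]
    have e1 : ∀ C : Finset (Fin n), (C.filter (fun i => L x (i, true))).card
        = (C.filter fun i => L x (i, false) ∧ L x (i, true)).card
          + (C.filter fun i => L x (i, true) ∧ ¬ L x (i, false)).card := by
      intro C
      have hcomm : (C.filter fun i => L x (i, false) ∧ L x (i, true))
          = (C.filter fun i => L x (i, true) ∧ L x (i, false)) := by
        apply Finset.filter_congr; intro i _; exact and_comm
      rw [hcomm, ← Finset.filter_filter, ← Finset.filter_filter,
        Finset.card_filter_add_card_filter_not]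
    have hS : (A.filter fun i => L x (i, false) ∧ ¬ L x (i, true)).card
        ≤ (B.filter fun i => L x (i, false) ∧ ¬ L x (i, true)).card := by
      apply gale_filter_card hg
      rintro a b ⟨ha0, ha1⟩ hab
      exact ⟨htrans _ _ _ ha0 hab, fun hb1 => ha1 (htrans _ _ _ hb1 (hstar' _ _ hab))⟩
    have hTc : (A.filter fun i => ¬ (L x (i, true) ∧ ¬ L x (i, false))).card
        ≤ (B.filter fun i => ¬ (L x (i, true) ∧ ¬ L x (i, false))).card := by
      apply gale_filter_card hg
      rintro a b ha hab ⟨hb1, hb0⟩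
      exact ha ⟨htrans _ _ _ hb1 (hstar' _ _ hab), fun ha0 => hb0 (htrans _ _ _ ha0 hab)⟩
    have hTA : (A.filter fun i => L x (i, true) ∧ ¬ L x (i, false)).card
        + (A.filter fun i => ¬ (L x (i, true) ∧ ¬ L x (i, false))).card = A.card :=
      Finset.card_filter_add_card_filter_not _
    have hTB : (B.filter fun i => L x (i, true) ∧ ¬ L x (i, false)).card
        + (B.filter fun i => ¬ (L x (i, true) ∧ ¬ L x (i, false))).card = B.card :=
      Finset.card_filter_add_card_filter_not _
    rw [e1 A] at cA
    rw [e1 B] at cB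
    rw [e0 A, e0 B]
    omega
  convert main using 4

end PhiLemmas

section Matroid
variable {n k : ℕ} {ℬ : Set (Finset (Fin n))}

lemma exchange_in (hM : MatroidBases k ℬ) {t : Fin n} {A : Finset (Fin n)}
    (hA : A ∈ ℬ) (htA : t ∉ A) :
    ∀ (c : ℕ) (B0 : Finset (Fin n)), B0 ∈ ℬ → t ∈ B0 → (B0 \ A).card ≤ c →
      ∃ a ∈ A, insert t (A.erase a) ∈ ℬ := by
  obtain ⟨-, hcard, hex⟩ := hM
  intro c
  induction c with
  | zero =>
    intro B0 hB0 htB0 hle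
    have : t ∈ B0 \ A := Finset.mem_sdiff.mpr ⟨htB0, htA⟩
    have := Finset.card_pos.mpr ⟨t, this⟩
    omega
  | succ c ih =>
    intro B0 hB0 htB0 hle
    by_cases hsub : B0 \ A ⊆ {t}
    · have h1 : B0 \ A = {t} := Finset.Subset.antisymm hsub
        (Finset.singleton_subset_iff.mpr (Finset.mem_sdiff.mpr ⟨htB0, htA⟩))
      have hcards : (A \ B0).card = 1 := by
        have e1 : (A \ B0).card + (A ∩ B0).card = A.card := by
          rw [Finset.card_sdiff_add_card_inter]
        have e2 : (B0 \ A).card + (B0 ∩ A).card = B0.card := by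
          rw [Finset.card_sdiff_add_card_inter]
        rw [Finset.inter_comm] at e2
        rw [h1, Finset.card_singleton] at e2
        rw [hcard A hA] at e1
        rw [hcard B0 hB0] at e2
        omega
      obtain ⟨x, hx⟩ := Finset.card_eq_one.mp hcards
      have hxA : x ∈ A \ B0 := hx ▸ Finset.mem_singleton_self x
      obtain ⟨b, hb, hins⟩ := hex A hA B0 hB0 x hxA
      have hbt : b = t := by
        rw [h1] at hb
        exact Finset.mem_singleton.mp hb
      exact ⟨x, (Finset.mem_sdiff.mp hxA).1, hbt ▸ hins⟩
    · obtain ⟨a0, ha0, ha0t⟩ : ∃ a0 ∈ B0 \ A, a0 ≠ t := by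
        obtain ⟨a0, ha0, h⟩ := Finset.not_subset.mp hsub
        exact ⟨a0, ha0, fun hc => h (hc ▸ Finset.mem_singleton_self t)⟩
      obtain ⟨b, hb, hins⟩ := hex B0 hB0 A hA a0 ha0
      have hbA : b ∈ A := (Finset.mem_sdiff.mp hb).1
      have hbB0 : b ∉ B0 := (Finset.mem_sdiff.mp hb).2
      apply ih (insert b (B0.erase a0)) hins
      · exact Finset.mem_insert_of_mem (Finset.mem_erase.mpr ⟨fun h => ha0t h.symm, htB0⟩)
      · have heq : (insert b (B0.erase a0)) \ A = (B0 \ A).erase a0 := by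
          ext y
          simp only [Finset.mem_sdiff, Finset.mem_insert, Finset.mem_erase]
          constructor
          · rintro ⟨rfl | ⟨hy1, hy2⟩, hyA⟩
            · exact absurd hbA hyA
            · exact ⟨hy1, hy2, hyA⟩
          · rintro ⟨hy1, hy2, hyA⟩
            exact ⟨Or.inr ⟨hy1, hy2⟩, hyA⟩
        rw [heq]
        have := Finset.card_erase_of_mem ha0
        omega

lemma exists_gale_max (ro : Fin n → Fin n → Prop)
    (hrefl : ∀ a, ro a a) (htrans : ∀ a b c, ro a b → ro b c → ro a c)
    (htot : ∀ a b, ro a b ∨ ro b a) :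
    ∀ (k : ℕ) (ℬ : Set (Finset (Fin n))), MatroidBases k ℬ →
      ∃ B ∈ ℬ, ∀ A ∈ ℬ, GaleLE ro A B := by
  intro k
  induction k with
  | zero =>
    rintro ℬ ⟨⟨B0, hB0⟩, hcard, -⟩
    refine ⟨B0, hB0, fun A hA => ?_⟩
    have : A = ∅ := Finset.card_eq_zero.mp (hcard A hA)
    subst this
    exact ⟨id, by simp, by simp, by simp⟩
  | succ k ih =>
    intro ℬ hM
    classical
    have hM' := hM
    obtain ⟨⟨B0, hB0⟩, hcard, hex⟩ := hM'
    have hB0ne : B0.Nonempty := Finset.card_pos.mp (by rw [hcard B0 hB0]; omega)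
    set T : Finset (Fin n) := Finset.univ.filter (fun t => ∃ B ∈ ℬ, t ∈ B) with hT
    have hTne : T.Nonempty := by
      obtain ⟨t, ht⟩ := hB0ne
      refine ⟨t, ?_⟩
      rw [hT]
      simp only [Finset.mem_filter, Finset.mem_univ, true_and]
      exact ⟨B0, hB0, ht⟩
    obtain ⟨t0, ht0T, ht0max⟩ := exists_rmin (r := fun a b => ro b a) hrefl
      (fun a b c hab hbc => htrans _ _ _ hbc hab) (fun a b => htot b a) T hTne
    obtain ⟨Bt, hBt, htBt⟩ : ∃ B ∈ ℬ, t0 ∈ B := by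
      rw [hT] at ht0T
      simpa using (Finset.mem_filter.mp ht0T).2
    have hmemT : ∀ A ∈ ℬ, ∀ a ∈ A, ro a t0 := by
      intro A hA a ha
      apply ht0max a
      rw [hT]
      simp only [Finset.mem_filter, Finset.mem_univ, true_and]
      exact ⟨A, hA, ha⟩
    set ℬ' : Set (Finset (Fin n)) := {C | t0 ∉ C ∧ insert t0 C ∈ ℬ} with hℬ'
    have hM'' : MatroidBases k ℬ' := by
      refine ⟨⟨Bt.erase t0, ?_⟩, ?_, ?_⟩
      · exact ⟨Finset.notMem_erase t0 Bt, by rw [Finset.insert_erase htBt]; exact hBt⟩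
      · rintro C ⟨hC1, hC2⟩
        have := hcard _ hC2
        rw [Finset.card_insert_of_notMem hC1] at this
        omega
      · rintro C ⟨hC1, hC2⟩ D ⟨hD1, hD2⟩ a ha
        obtain ⟨haC, haD⟩ := Finset.mem_sdiff.mp ha
        have hat0 : a ≠ t0 := fun h => hC1 (h ▸ haC)
        have ha' : a ∈ insert t0 C \ insert t0 D := by
          simp only [Finset.mem_sdiff, Finset.mem_insert]
          exact ⟨Or.inr haC, fun h => h.elim hat0 haD⟩
        obtain ⟨b, hb, hins⟩ := hex _ hC2 _ hD2 a ha'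
        simp only [Finset.mem_sdiff, Finset.mem_insert] at hb
        obtain ⟨hb1, hb2⟩ := hb
        have hbt0 : b ≠ t0 := fun h => hb2 (Or.inl h)
        have hbD : b ∈ D := hb1.resolve_left hbt0
        have hbC : b ∉ C := fun h => hb2 (Or.inr h)
        refine ⟨b, Finset.mem_sdiff.mpr ⟨hbD, hbC⟩, ?_, ?_⟩
        · simp only [Finset.mem_insert, not_or]
          exact ⟨fun h => hbt0 h.symm, fun h => hC1 (Finset.mem_of_mem_erase h)⟩
        · have heq : insert t0 (insert b (C.erase a)) = insert b ((insert t0 C).erase a) := by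
            ext y
            simp only [Finset.mem_insert, Finset.mem_erase]
            constructor
            · rintro (rfl | rfl | ⟨h1, h2⟩)
              · exact Or.inr ⟨hat0.symm, Or.inl rfl⟩
              · exact Or.inl rfl
              · exact Or.inr ⟨h1, Or.inr h2⟩
            · rintro (rfl | ⟨h1, rfl | h2⟩)
              · exact Or.inr (Or.inl rfl)
              · exact Or.inl rfl
              · exact Or.inr (Or.inr ⟨h1, h2⟩)
          rw [heq]
          exact hins
    obtain ⟨B', hB', hmax'⟩ := ih ℬ' hM''
    have hB'mem : insert t0 B' ∈ ℬ := hB'.2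
    have ht0B' : t0 ∉ B' := hB'.1
    have main : ∀ A ∈ ℬ, t0 ∈ A → GaleLE ro A (insert t0 B') := by
      intro A hA htA
      have hA' : A.erase t0 ∈ ℬ' := ⟨Finset.notMem_erase t0 A,
        by rw [Finset.insert_erase htA]; exact hA⟩
      obtain ⟨f, finj, fmem, frel⟩ := hmax' _ hA'
      refine ⟨fun x => if x = t0 then t0 else f x, ?_, ?_, ?_⟩
      · intro x hx y hy hxy
        simp only at hxy
        by_cases hxt : x = t0 <;> by_cases hyt : y = t0
        · rw [hxt, hyt]
        · rw [if_pos hxt, if_neg hyt] at hxy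
          exact absurd (hxy ▸ fmem y (Finset.mem_erase.mpr ⟨hyt, hy⟩)) ht0B'
        · rw [if_neg hxt, if_pos hyt] at hxy
          exact absurd (hxy.symm ▸ fmem x (Finset.mem_erase.mpr ⟨hxt, hx⟩)) ht0B'
        · rw [if_neg hxt, if_neg hyt] at hxy
          exact finj (Finset.mem_erase.mpr ⟨hxt, hx⟩) (Finset.mem_erase.mpr ⟨hyt, hy⟩) hxy
      · intro a ha
        dsimp only
        by_cases hat : a = t0
        · rw [if_pos hat]; exact Finset.mem_insert_self t0 B'
        · rw [if_neg hat]
          exact Finset.mem_insert_of_mem (fmem a (Finset.mem_erase.mpr ⟨hat, ha⟩))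
      · intro a ha
        dsimp only
        by_cases hat : a = t0
        · rw [if_pos hat, hat]; exact hrefl t0
        · rw [if_neg hat]; exact frel a (Finset.mem_erase.mpr ⟨hat, ha⟩)
    refine ⟨insert t0 B', hB'mem, fun A hA => ?_⟩
    by_cases htA : t0 ∈ A
    · exact main A hA htA
    · obtain ⟨a, haA, hA2⟩ := exchange_in hM hA htA ((Bt \ A).card) Bt hBt htBt le_rfl
      have ht0A2 : t0 ∈ insert t0 (A.erase a) := Finset.mem_insert_self _ _
      have step : GaleLE ro A (insert t0 (A.erase a)) := by
        refine ⟨fun x => if x = a then t0 else x, ?_, ?_, ?_⟩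
        · intro x hx y hy hxy
          simp only at hxy
          by_cases hxa : x = a <;> by_cases hya : y = a
          · rw [hxa, hya]
          · rw [if_pos hxa, if_neg hya] at hxy
            exact absurd (hxy ▸ hy) htA
          · rw [if_neg hxa, if_pos hya] at hxy
            exact absurd (hxy ▸ hx) htA
          · rwa [if_neg hxa, if_neg hya] at hxy
        · intro x hx
          dsimp only
          by_cases hxa : x = a
          · rw [if_pos hxa]; exact Finset.mem_insert_self _ _
          · rw [if_neg hxa]
            exact Finset.mem_insert_of_mem (Finset.mem_erase.mpr ⟨hxa, hx⟩)
        · intro x hx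
          dsimp only
          by_cases hxa : x = a
          · rw [if_pos hxa, hxa]; exact hmemT A hA a haA
          · rw [if_neg hxa]; exact hrefl x
      exact gale_trans htrans step (main _ hA2 ht0A2)

end Matroid

section Dn
variable {n : ℕ} (d : DnOrder n) {m : J n}

lemma dn_pair_unique (hm1 : ¬ d.le m (jstar m)) (hm2 : ¬ d.le (jstar m) m)
    {x : J n} (hx1 : ¬ d.le x (jstar x)) (hx2 : ¬ d.le (jstar x) x) :
    x = m ∨ x = jstar m := by
  by_cases h1 : x = m
  · exact Or.inl h1
  by_cases h2 : x = jstar m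
  · exact Or.inr h2
  exfalso
  have hcomp : d.le x m ∨ d.le m x := by
    rcases d.almost_total x m with h | h | h
    · exact Or.inl h
    · exact Or.inr h
    · exact absurd (by rw [h, jstar_jstar']) h2
  have hcomp2 : d.le (jstar x) m ∨ d.le m (jstar x) := by
    rcases d.almost_total (jstar x) m with h | h | h
    · exact Or.inl h
    · exact Or.inr h
    · rw [jstar_jstar'] at h
      exact absurd h.symm h1
  rcases hcomp with h | h
  · rcases hcomp2 with h' | h'
    · have := d.star_anti _ _ h'
      rw [jstar_jstar'] at this
      exact hm2 (d.trans _ _ _ this h)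
    · exact hx1 (d.trans _ _ _ h h')
  · rcases hcomp2 with h' | h'
    · exact hx2 (d.trans _ _ _ h' h)
    · have := d.star_anti _ _ h'
      rw [jstar_jstar'] at this
      exact hm1 (d.trans _ _ _ h this)

def DnL (d : DnOrder n) (m : J n) : J n → J n → Prop :=
  fun x y => d.le x y ∨ (x = jstar m ∧ y = m)

lemma DnL_refl : ∀ x, DnL d m x x := fun x => Or.inl (d.refl x)

lemma DnL_sub : ∀ x y, d.le x y → DnL d m x y := fun _ _ h => Or.inl h

lemma DnL_star : ∀ x y, DnL d m x y → DnL d m (jstar y) (jstar x) := by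
  rintro x y (h | ⟨hx, hy⟩)
  · exact Or.inl (d.star_anti _ _ h)
  · rw [hx, hy, jstar_jstar']
    exact Or.inr ⟨rfl, rfl⟩

lemma DnL_trans (hm1 : ¬ d.le m (jstar m)) (hm2 : ¬ d.le (jstar m) m) :
    ∀ x y z, DnL d m x y → DnL d m y z → DnL d m x z := by
  rintro x y z (hxy | ⟨hx, hy⟩) (hyz | ⟨hy', hz⟩)
  · exact Or.inl (d.trans _ _ _ hxy hyz)
  · -- hy' : y = jstar m, hz : z = m, hxy : d.le x y
    rw [hz]
    rw [hy'] at hxy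
    by_cases hxm : x = jstar m
    · exact Or.inr ⟨hxm, rfl⟩
    · left
      rcases d.almost_total x m with h | h | h
      · exact h
      · exact absurd (d.trans _ _ _ h hxy) hm1
      · exact absurd (by rw [h, jstar_jstar']) hxm
  · -- hx : x = jstar m, hy : y = m, hyz : d.le y z
    rw [hx]
    rw [hy] at hyz
    by_cases hzm : z = m
    · exact Or.inr ⟨rfl, hzm⟩
    · left
      rcases d.almost_total (jstar m) z with h | h | h
      · exact h
      · exact absurd (d.trans _ _ _ hyz h) hm1
      · rw [jstar_jstar'] at h
        exact absurd h hzm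
  · have hmm : m = jstar m := hy.symm.trans hy'
    exact absurd (by rw [← hmm]; exact d.refl m) hm1
  
lemma DnL_antisymm (hm1 : ¬ d.le m (jstar m)) :
    ∀ x y, DnL d m x y → DnL d m y x → x = y := by
  rintro x y (hxy | ⟨hx, hy⟩) (hyx | ⟨hx', hy'⟩)
  · exact d.antisymm _ _ hxy hyx
  · rw [hy', hx'] at hxy
    exact absurd hxy hm1
  · rw [hy, hx] at hyx
    exact absurd hyx hm1
  · rw [hx, hy]
    exact (hy.symm.trans hx').symm

lemma DnL_total (hm1 : ¬ d.le m (jstar m)) (hm2 : ¬ d.le (jstar m) m) :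
    ∀ x y, DnL d m x y ∨ DnL d m y x := by
  intro x y
  rcases d.almost_total x y with h | h | h
  · exact Or.inl (Or.inl h)
  · exact Or.inr (Or.inl h)
  · subst h
    by_cases h1 : d.le x (jstar x)
    · exact Or.inl (Or.inl h1)
    by_cases h2 : d.le (jstar x) x
    · exact Or.inr (Or.inl h2)
    rcases dn_pair_unique d hm1 hm2 h1 h2 with hxm | hxm
    · exact Or.inr (Or.inr ⟨by rw [hxm], hxm⟩)
    · exact Or.inl (Or.inr ⟨hxm, by rw [hxm, jstar_jstar']⟩)

end Dn


/-- if `M₂` (rank `k - 1`) is a quotient of `M₁` (rank `k`), then for every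
`Dₙ`-admissible order the maximal bases of `Φ(M₁)` and `Φ(M₂)` have symmetric difference
`{i, i*}` for some `i`; i.e. `Φ(M₁)`, `Φ(M₂)` are a Lagrangian pair. -/
theorem quotient_implies_lagrangian_pair (n k : ℕ) (hk : 1 ≤ k)
    (ℬ₁ ℬ₂ : Set (Finset (Fin n)))
    (h₁ : MatroidBases k ℬ₁) (h₂ : MatroidBases (k - 1) ℬ₂)
    (hq : IsQuotient ℬ₁ ℬ₂) (d : DnOrder n)
    (C₁ C₂ : Finset (J n)) (hC₁ : C₁ ∈ Phi '' ℬ₁) (hC₂ : C₂ ∈ Phi '' ℬ₂)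
    (hmax₁ : ∀ C ∈ Phi '' ℬ₁, GaleLE d.le C C₁)
    (hmax₂ : ∀ C ∈ Phi '' ℬ₂, GaleLE d.le C C₂) :
    ∃ i : J n, symmDiff C₁ C₂ = {i, jstar i} := by
  classical
  obtain ⟨B₁, hB₁, rfl⟩ := hC₁
  obtain ⟨B₂, hB₂, rfl⟩ := hC₂
  obtain ⟨m, hm1, hm2⟩ := d.middle
  have Lrefl := DnL_refl d (m := m)
  have Ltrans := DnL_trans d hm1 hm2
  have Lanti := DnL_antisymm d hm1
  have Ltot := DnL_total d hm1 hm2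
  have Lstar := DnL_star d (m := m)
  have Lsub := DnL_sub d (m := m)
  set ro : Fin n → Fin n → Prop := fun i j => DnL d m (i, false) (j, false) with hro
  have ro_refl : ∀ a, ro a a := fun a => Lrefl _
  have ro_trans : ∀ a b c, ro a b → ro b c → ro a c := fun a b c h h' => Ltrans _ _ _ h h'
  have ro_anti : ∀ a b, ro a b → ro b a → a = b := by
    intro a b h h'
    have := Lanti _ _ h h'
    exact congrArg Prod.fst this
  have ro_tot : ∀ a b, ro a b ∨ ro b a := fun a b => Ltot _ _
  have ro_lin : IsLinearOrder (Fin n) ro :=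
    { refl := ro_refl
      trans := ro_trans
      antisymm := ro_anti
      total := ro_tot }
  have key : ∀ (kk : ℕ) (𝒞 : Set (Finset (Fin n))), MatroidBases kk 𝒞 →
      ∀ B : Finset (Fin n), B ∈ 𝒞 → (∀ C ∈ Phi '' 𝒞, GaleLE d.le C (Phi B)) →
      ∀ A ∈ 𝒞, GaleLE ro A B := by
    intro kk 𝒞 hM B hB hmax
    obtain ⟨Bs, hBs, hmaxs⟩ := exists_gale_max ro ro_refl ro_trans ro_tot kk 𝒞 hM
    have h1 : GaleLE (DnL d m) (Phi B) (Phi Bs) :=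
      phi_gale_of_gale Lrefl Ltrans Ltot Lstar
        (by rw [hM.2.1 B hB, hM.2.1 Bs hBs]) (hmaxs B hB)
    have h2 : GaleLE (DnL d m) (Phi Bs) (Phi B) :=
      gale_mono Lsub (hmax (Phi Bs) ⟨Bs, hBs, rfl⟩)
    have hPhiEq : Phi B = Phi Bs := gale_antisymm Ltrans Lanti Lrefl Ltot h1 h2
    have hBeq : B = Bs := phi_injective hPhiEq
    rw [hBeq]
    exact hmaxs
  have hsub : B₂ ⊆ B₁ := hq ro ro_lin B₁ hB₁ B₂ hB₂
    (key k ℬ₁ h₁ B₁ hB₁ hmax₁) (key (k - 1) ℬ₂ h₂ B₂ hB₂ hmax₂)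
  have hc1 : B₁.card = k := h₁.2.1 B₁ hB₁
  have hc2 : B₂.card = k - 1 := h₂.2.1 B₂ hB₂
  have hcd : (B₁ \ B₂).card = 1 := by
    rw [Finset.card_sdiff_of_subset hsub]
    omega
  obtain ⟨j, hj⟩ := Finset.card_eq_one.mp hcd
  refine ⟨(j, false), ?_⟩
  have hjmem : j ∈ B₁ \ B₂ := hj ▸ Finset.mem_singleton_self j
  have hjB₁ : j ∈ B₁ := (Finset.mem_sdiff.mp hjmem).1
  have hjB₂ : j ∉ B₂ := (Finset.mem_sdiff.mp hjmem).2
  have hjs : jstar ((j, false) : J n) = (j, true) := rfl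
  rw [hjs]
  ext x
  obtain ⟨i, b⟩ := x
  rw [Finset.mem_symmDiff]
  have hiff : i ∈ B₁ ∧ i ∉ B₂ ↔ i = j := by
    constructor
    · rintro ⟨ha, hb⟩
      have : i ∈ B₁ \ B₂ := Finset.mem_sdiff.mpr ⟨ha, hb⟩
      rw [hj] at this
      exact Finset.mem_singleton.mp this
    · rintro rfl
      exact ⟨hjB₁, hjB₂⟩
  have hsubi : i ∈ B₂ → i ∈ B₁ := fun h => hsub h
  cases b
  · simp only [mem_phi_false, Finset.mem_insert, Finset.mem_singleton, Prod.mk.injEq,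
      Bool.false_eq_true, and_false, or_false, and_true]
    tauto
  · simp only [mem_phi_true, Finset.mem_insert, Finset.mem_singleton, Prod.mk.injEq,
      Bool.true_eq_false, and_false, false_or, and_true, not_not]
    tauto
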